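/- arXiv:2405.16611 — 2 statements merged into one kernel-verified Lean document; each statement's English description precedes it below -/
import Mathlib

section
/- Let 𝓘 be an implementation of an object O and suppose π0·π1 ∈ traces(𝓘) and π0·π2 ∈ traces(𝓘) for event sequences π0, π1, π2 such that π0|_obj is a complete history of O and procs(π1) ∩ procs(π2) = ∅. Then π0·π ∈ traces(𝓘) for every π ∈ π1 ⧢ π2. -/
set_option autoImplicit false

namespace WMM

universe u v

/-! ### Memory actions and events -/

inductive MemAct (Var Val : Type) : Type where
  | write (x : Var) (v : Val)
  | read (x : Var) (v : Val)
  | rmw (x : Var) (vold vnew : Val)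
  | fence

structure MemEv (Proc Var Val : Type) : Type where
  proc : Proc
  act : MemAct Var Val

section Mem

variable {Proc Var Val : Type}

def MemEv.isWrite (e : MemEv Proc Var Val) : Prop := ∃ x v, e.act = MemAct.write x v
def MemEv.isRead (e : MemEv Proc Var Val) : Prop := ∃ x v, e.act = MemAct.read x v
def MemEv.isRMW (e : MemEv Proc Var Val) : Prop := ∃ x v w, e.act = MemAct.rmw x v w
def MemEv.isFence (e : MemEv Proc Var Val) : Prop := e.act = MemAct.fence

/-- The set of processes appearing in an observable memory sequence. -/
def memProcs (σ : List (MemEv Proc Var Val)) : Set Proc := {p | ∃ e ∈ σ, MemEv.proc e = p}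

end Mem

/-! ### Shuffles -/

/-- `Shuffle s1 s2 s` means `s` is an interleaving of `s1` and `s2`. -/
inductive Shuffle {α : Type u} : List α → List α → List α → Prop where
  | nil : Shuffle [] [] []
  | left {s1 s2 s : List α} (x : α) : Shuffle s1 s2 s → Shuffle (s1 ++ [x]) s2 (s ++ [x])
  | right {s1 s2 s : List α} (x : α) : Shuffle s1 s2 s → Shuffle s1 (s2 ++ [x]) (s ++ [x])

/-! ### Paths of a labeled transition relation -/

inductive LTSPath {S : Type u} {L : Type v} (step : S → L → S → Prop) : S → List L → S → Prop where
  | nil (s : S) : LTSPath step s [] s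
  | cons {s s' s'' : S} {l : L} {ls : List L} :
      step s l s' → LTSPath step s' ls s'' → LTSPath step s (l :: ls) s''

/-! ### Memory models -/

/-- A memory model: an LTS whose labels are memory events or the silent label `τ = none`. -/
structure MemModel (Proc Var Val : Type) : Type 1 where
  State : Type
  init : State
  step : State → Option (MemEv Proc Var Val) → State → Prop

section MemModel

variable {Proc Var Val : Type}

/-- A state is stable if no silent (`τ`) transition is enabled. -/
def MemModel.Stable (M : MemModel Proc Var Val) (q : M.State) : Prop :=
  ∀ q', ¬ M.step q none q'

/-- Observable memory sequences from a state: traces with `τ` steps erased. -/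
def MemModel.OTraces (M : MemModel Proc Var Val) (q : M.State) :
    Set (List (MemEv Proc Var Val)) :=
  {σ | ∃ (π : List (Option (MemEv Proc Var Val))) (q' : M.State),
      LTSPath M.step q π q' ∧ π.reduceOption = σ}

def WeaklyMergeable (M : MemModel Proc Var Val) (σ1 σ2 : List (MemEv Proc Var Val)) : Prop :=
  ∀ q0 : M.State, M.Stable q0 → σ1 ∈ M.OTraces q0 → σ2 ∈ M.OTraces q0 →
    ∃ σ, Shuffle σ1 σ2 σ ∧ σ ∈ M.OTraces q0

def StronglyMergeable (M : MemModel Proc Var Val) (σ1 σ2 : List (MemEv Proc Var Val)) : Prop :=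
  ∀ q0 : M.State, M.Stable q0 → σ1 ∈ M.OTraces q0 → σ2 ∈ M.OTraces q0 →
    ∀ σ, Shuffle σ1 σ2 σ → σ ∈ M.OTraces q0

/-- Weak/strong mergeability, selected by a Boolean flag. -/
def MemMergeable (strong : Bool) (M : MemModel Proc Var Val)
    (σ1 σ2 : List (MemEv Proc Var Val)) : Prop :=
  if strong then StronglyMergeable M σ1 σ2 else WeaklyMergeable M σ1 σ2

end MemModel

/-! ### The SCM, TSO and RA memory models -/

section Models

variable (Proc Var Val : Type)

inductive SCMStep [DecidableEq Var] :
    (Var → Val) → Option (MemEv Proc Var Val) → (Var → Val) → Prop where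
  | write (m : Var → Val) (p : Proc) (x : Var) (v : Val) :
      SCMStep m (some ⟨p, MemAct.write x v⟩) (Function.update m x v)
  | read (m : Var → Val) (p : Proc) (x : Var) :
      SCMStep m (some ⟨p, MemAct.read x (m x)⟩) m
  | rmw (m : Var → Val) (p : Proc) (x : Var) (vnew : Val) :
      SCMStep m (some ⟨p, MemAct.rmw x (m x) vnew⟩) (Function.update m x vnew)
  | fence (m : Var → Val) (p : Proc) :
      SCMStep m (some ⟨p, MemAct.fence⟩) m

def SCMModel [DecidableEq Var] [Zero Val] : MemModel Proc Var Val where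
  State := Var → Val
  init := fun _ => 0
  step := SCMStep Proc Var Val

inductive TSOStep [DecidableEq Proc] [DecidableEq Var] :
    (Var → Val) × (Proc → List (Var × Val)) → Option (MemEv Proc Var Val) →
      (Var → Val) × (Proc → List (Var × Val)) → Prop where
  | write (m : Var → Val) (b : Proc → List (Var × Val)) (p : Proc) (x : Var) (v : Val) :
      TSOStep (m, b) (some ⟨p, MemAct.write x v⟩)
        (m, Function.update b p (b p ++ [(x, v)]))
  | readBuffer (m : Var → Val) (b : Proc → List (Var × Val)) (p : Proc) (x : Var) (v : Val) :
      ((b p).filter (fun pr => decide (pr.1 = x))).getLast? = some (x, v) →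
      TSOStep (m, b) (some ⟨p, MemAct.read x v⟩) (m, b)
  | readMemory (m : Var → Val) (b : Proc → List (Var × Val)) (p : Proc) (x : Var) :
      (b p).filter (fun pr => decide (pr.1 = x)) = [] →
      TSOStep (m, b) (some ⟨p, MemAct.read x (m x)⟩) (m, b)
  | rmw (m : Var → Val) (b : Proc → List (Var × Val)) (p : Proc) (x : Var) (vnew : Val) :
      b p = [] →
      TSOStep (m, b) (some ⟨p, MemAct.rmw x (m x) vnew⟩) (Function.update m x vnew, b)
  | fence (m : Var → Val) (b : Proc → List (Var × Val)) (p : Proc) :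
      b p = [] → TSOStep (m, b) (some ⟨p, MemAct.fence⟩) (m, b)
  | propagate (m : Var → Val) (b : Proc → List (Var × Val)) (p : Proc) (x : Var) (v : Val)
      (β : List (Var × Val)) :
      b p = (x, v) :: β →
      TSOStep (m, b) none (Function.update m x v, Function.update b p β)

def TSOModel [DecidableEq Proc] [DecidableEq Var] [Zero Val] : MemModel Proc Var Val where
  State := (Var → Val) × (Proc → List (Var × Val))
  init := (fun _ => 0, fun _ => [])
  step := TSOStep Proc Var Val

/-- A message of the RA memory model. -/
structure RAMsg (Var Val : Type) : Type where
  var : Var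
  val : Val
  time : ℕ
  view : Var → ℕ

structure RAState (Proc Var Val : Type) : Type where
  mem : Set (RAMsg Var Val)
  view : Proc → Var → ℕ
  fview : Var → ℕ

end Models

/-- Pointwise join (maximum) of two views. -/
def viewJoin {Var : Type} (V1 V2 : Var → ℕ) : Var → ℕ := fun y => max (V1 y) (V2 y)

section RA

variable (Proc Var Val : Type)

inductive RAStep [DecidableEq Proc] [DecidableEq Var] :
    RAState Proc Var Val → Option (MemEv Proc Var Val) → RAState Proc Var Val → Prop where
  | write (s : RAState Proc Var Val) (p : Proc) (x : Var) (v : Val) (t : ℕ) :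
      s.view p x < t →
      (∀ μ ∈ s.mem, μ.var = x → μ.time ≠ t) →
      RAStep s (some ⟨p, MemAct.write x v⟩)
        ⟨insert ⟨x, v, t, Function.update (s.view p) x t⟩ s.mem,
         Function.update s.view p (Function.update (s.view p) x t), s.fview⟩
  | read (s : RAState Proc Var Val) (p : Proc) (x : Var) (v : Val) (V : Var → ℕ) :
      (⟨x, v, s.view p x, V⟩ : RAMsg Var Val) ∈ s.mem →
      RAStep s (some ⟨p, MemAct.read x v⟩) s
  | rmw (s : RAState Proc Var Val) (p : Proc) (x : Var) (vexp vnew : Val) (V : Var → ℕ) :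
      (⟨x, vexp, s.view p x, V⟩ : RAMsg Var Val) ∈ s.mem →
      (∀ μ ∈ s.mem, μ.var = x → μ.time ≠ s.view p x + 1) →
      RAStep s (some ⟨p, MemAct.rmw x vexp vnew⟩)
        ⟨insert ⟨x, vnew, s.view p x + 1, Function.update (s.view p) x (s.view p x + 1)⟩ s.mem,
         Function.update s.view p (Function.update (s.view p) x (s.view p x + 1)), s.fview⟩
  | fence (s : RAState Proc Var Val) (p : Proc) :
      RAStep s (some ⟨p, MemAct.fence⟩)
        ⟨s.mem, Function.update s.view p (viewJoin (s.view p) s.fview),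
         viewJoin (s.view p) s.fview⟩
  | propagate (s : RAState Proc Var Val) (p : Proc) (μ : RAMsg Var Val) :
      μ ∈ s.mem → s.view p μ.var < μ.time →
      RAStep s none
        ⟨s.mem, Function.update s.view p (viewJoin (s.view p) μ.view), s.fview⟩

def RAModel [DecidableEq Proc] [DecidableEq Var] [Zero Val] : MemModel Proc Var Val where
  State := RAState Proc Var Val
  init := ⟨{μ | ∃ x : Var, μ = ⟨x, 0, 0, fun _ => 0⟩}, fun _ _ => 0, fun _ => 0⟩
  step := RAStep Proc Var Val

end RA

/-! ### Well-behaved memory models -/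

section WellBehaved

variable {Proc Var Val : Type}

/-- Reachability by silent steps. -/
def TauReach (M : MemModel Proc Var Val) : M.State → M.State → Prop :=
  Relation.ReflTransGen (fun q q' => M.step q none q')

/-- A memory model is well-behaved if there is a simulation from SCM into its stable states. -/
def WellBehaved [DecidableEq Var] [Zero Val] (M : MemModel Proc Var Val) : Prop :=
  ∃ R : (Var → Val) → M.State → Prop,
    (∀ m q, R m q → M.Stable q) ∧
    R (fun _ => (0 : Val)) M.init ∧
    (∀ m q, R m q → ∀ (l : Option (MemEv Proc Var Val)) (m' : Var → Val),
      SCMStep Proc Var Val m l m' →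
      ∃ q1 q' : M.State, M.step q l q1 ∧ TauReach M q1 q' ∧ M.Stable q' ∧ R m' q')

end WellBehaved

/-! ### Patterns of observable memory sequences -/

section Patterns

variable {Proc Var Val : Type}

def IsSolo (σ : List (MemEv Proc Var Val)) : Prop :=
  ∀ e ∈ σ, ∀ e' ∈ σ, MemEv.proc e = MemEv.proc e'

def IsRW (σ : List (MemEv Proc Var Val)) : Prop :=
  ∀ e ∈ σ, MemEv.isWrite e ∨ MemEv.isRead e

def IsRWF (σ : List (MemEv Proc Var Val)) : Prop :=
  ∀ e ∈ σ, MemEv.isWrite e ∨ MemEv.isRead e ∨ MemEv.isFence e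

/-- Read-before-write: no read-after-write pattern on distinct variables. -/
def IsRBW (σ : List (MemEv Proc Var Val)) : Prop :=
  ∀ (k1 k2 : ℕ) (e1 e2 : MemEv Proc Var Val) (x y : Var) (v w : Val),
    k1 < k2 → σ[k1]? = some e1 → σ[k2]? = some e2 →
    e1.act = MemAct.write x v → e2.act = MemAct.read y w → x ≠ y →
    ∃ (k : ℕ) (e : MemEv Proc Var Val) (u : Val),
      k1 < k ∧ k < k2 ∧ σ[k]? = some e ∧ e.act = MemAct.write y u

/-- Trailing-fence: no fence is immediately followed by a non-fence event. -/
def IsTF (σ : List (MemEv Proc Var Val)) : Prop :=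
  ∀ (k : ℕ) (e e' : MemEv Proc Var Val),
    σ[k]? = some e → σ[k + 1]? = some e' → MemEv.isFence e → MemEv.isFence e'

/-- Leading-fence: no fence is immediately preceded by a non-fence event. -/
def IsLF (σ : List (MemEv Proc Var Val)) : Prop :=
  ∀ (k : ℕ) (e e' : MemEv Proc Var Val),
    σ[k]? = some e → σ[k + 1]? = some e' → MemEv.isFence e' → MemEv.isFence e

def IsLTF (σ : List (MemEv Proc Var Val)) : Prop :=
  ∃ σ' σ'' : List (MemEv Proc Var Val), σ = σ' ++ σ'' ∧ IsLF σ' ∧ IsTF σ''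

def IsPPTF [DecidableEq Proc] (σ : List (MemEv Proc Var Val)) : Prop :=
  ∀ p : Proc, IsTF (σ.filter (fun e => decide (e.proc = p)))

def IsPPLF [DecidableEq Proc] (σ : List (MemEv Proc Var Val)) : Prop :=
  ∀ p : Proc, IsLF (σ.filter (fun e => decide (e.proc = p)))

end Patterns

/-! ### Objects, events and histories -/

inductive ObjAct (Op Ret : Type) : Type where
  | inv (o : Op)
  | res (u : Ret)

structure ObjEv (Proc Op Ret : Type) : Type where
  proc : Proc
  act : ObjAct Op Ret

inductive EvAct (Var Val Op Ret : Type) : Type where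
  | mem (a : MemAct Var Val)
  | inv (o : Op)
  | res (u : Ret)

/-- A general event: a memory event or an object event of some process. -/
structure Ev (Proc Var Val Op Ret : Type) : Type where
  proc : Proc
  act : EvAct Var Val Op Ret

section Events

variable {Proc Var Val Op Ret : Type}

def ObjAct.isInv : ObjAct Op Ret → Prop
  | ObjAct.inv _ => True
  | _ => False

def ObjAct.isRes : ObjAct Op Ret → Prop
  | ObjAct.res _ => True
  | _ => False

def Ev.toMem : Ev Proc Var Val Op Ret → Option (MemEv Proc Var Val)
  | ⟨p, EvAct.mem a⟩ => some ⟨p, a⟩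
  | _ => none

def Ev.toObj : Ev Proc Var Val Op Ret → Option (ObjEv Proc Op Ret)
  | ⟨p, EvAct.inv o⟩ => some ⟨p, ObjAct.inv o⟩
  | ⟨p, EvAct.res u⟩ => some ⟨p, ObjAct.res u⟩
  | _ => none

/-- Restriction of an event sequence to its memory events. -/
def restrictMem (π : List (Ev Proc Var Val Op Ret)) : List (MemEv Proc Var Val) :=
  π.filterMap Ev.toMem

/-- Restriction of an event sequence to its object events. -/
def restrictObj (π : List (Ev Proc Var Val Op Ret)) : List (ObjEv Proc Op Ret) :=
  π.filterMap Ev.toObj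

def procsEv (π : List (Ev Proc Var Val Op Ret)) : Set Proc := {p | ∃ e ∈ π, Ev.proc e = p}

def procsObj (h : List (ObjEv Proc Op Ret)) : Set Proc := {p | ∃ e ∈ h, ObjEv.proc e = p}

def Ev.isWriteEv (e : Ev Proc Var Val Op Ret) : Prop :=
  ∃ x v, e.act = EvAct.mem (MemAct.write x v)

def Ev.isReadEv (e : Ev Proc Var Val Op Ret) : Prop :=
  ∃ x v, e.act = EvAct.mem (MemAct.read x v)

def Ev.isResEv (e : Ev Proc Var Val Op Ret) : Prop := ∃ u, e.act = EvAct.res u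

def Ev.isFenceEv (e : Ev Proc Var Val Op Ret) : Prop := e.act = EvAct.mem MemAct.fence

/-- The two-event history `⟨p : o ⇒ u⟩`. -/
def invres (p : Proc) (o : Op) (u : Ret) : List (ObjEv Proc Op Ret) :=
  [⟨p, ObjAct.inv o⟩, ⟨p, ObjAct.res u⟩]

/-- Complete sequential histories: concatenations of matching invocation–response pairs. -/
inductive CompleteSeq : List (ObjEv Proc Op Ret) → Prop where
  | nil : CompleteSeq []
  | cons (p : Proc) (o : Op) (u : Ret) {h : List (ObjEv Proc Op Ret)} :
      CompleteSeq h → CompleteSeq (⟨p, ObjAct.inv o⟩ :: ⟨p, ObjAct.res u⟩ :: h)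

/-- Sequential histories: prefixes of complete sequential histories. -/
def Sequential (h : List (ObjEv Proc Op Ret)) : Prop :=
  ∃ h' : List (ObjEv Proc Op Ret), CompleteSeq h' ∧ h <+: h'

def WellFormed [DecidableEq Proc] (h : List (ObjEv Proc Op Ret)) : Prop :=
  ∀ p : Proc, Sequential (h.filter (fun e => decide (e.proc = p)))

/-- Complete histories: well-formed, and each process's restriction is empty or
ends with a response event. -/
def CompleteH [DecidableEq Proc] (h : List (ObjEv Proc Op Ret)) : Prop :=
  WellFormed h ∧
    ∀ p : Proc, h.filter (fun e => decide (e.proc = p)) = [] ∨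
      ∃ e : ObjEv Proc Op Ret,
        (h.filter (fun e => decide (e.proc = p))).getLast? = some e ∧ e.act.isRes

end Events

/-! ### Reorderings and linearization -/

/-- `Reorder R s s'` : `s'` is an `R`-reordering of `s`. -/
def Reorder {α : Type u} (R : α → α → Prop) (s s' : List α) : Prop :=
  ∃ f : Fin s.length ≃ Fin s'.length,
    (∀ i : Fin s.length, s'.get (f i) = s.get i) ∧
    ∀ i j : Fin s.length, i < j → R (s.get i) (s.get j) → f i < f j

section Lin

variable {Proc Var Val Op Ret : Type}

/-- The `sproc` relation on general events: same process. -/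
def sprocEv (e1 e2 : Ev Proc Var Val Op Ret) : Prop := e1.proc = e2.proc

/-- The `lin` relation on object events. -/
def linRel (e1 e2 : ObjEv Proc Op Ret) : Prop :=
  e1.proc = e2.proc ∨ (e1.act.isRes ∧ e2.act.isInv)

/-- `h ⊑ H'`: some history in `H'` linearizes `h`. -/
def LinInto (Spec : Set (List (ObjEv Proc Op Ret))) (h : List (ObjEv Proc Op Ret)) : Prop :=
  ∃ h' ∈ Spec, Reorder linRel h h'

/-- A specification: a prefix-closed set of complete sequential histories. -/
def IsSpec (Spec : Set (List (ObjEv Proc Op Ret))) : Prop :=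
  (∀ h ∈ Spec, CompleteSeq h) ∧
  (∀ h ∈ Spec, ∀ h' : List (ObjEv Proc Op Ret), h' <+: h → CompleteSeq h' → h' ∈ Spec)

/-- A deterministic object: no two specification histories have a longest common prefix
ending with an invocation. -/
def Deterministic (Spec : Set (List (ObjEv Proc Op Ret))) : Prop :=
  ∀ h1 ∈ Spec, ∀ h2 ∈ Spec, ∀ (g : List (ObjEv Proc Op Ret)) (p : Proc) (o : Op),
    (g ++ [⟨p, ObjAct.inv o⟩]) <+: h1 → (g ++ [⟨p, ObjAct.inv o⟩]) <+: h2 →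
    ∃ e : ObjEv Proc Op Ret,
      (g ++ [⟨p, ObjAct.inv o⟩, e]) <+: h1 ∧ (g ++ [⟨p, ObjAct.inv o⟩, e]) <+: h2

def WeaklySpecMergeableAfter (Spec : Set (List (ObjEv Proc Op Ret)))
    (h0 h1 h2 : List (ObjEv Proc Op Ret)) : Prop :=
  LinInto Spec (h0 ++ h1) → LinInto Spec (h0 ++ h2) →
    ∃ h, Shuffle h1 h2 h ∧ LinInto Spec (h0 ++ h)

def StronglySpecMergeableAfter (Spec : Set (List (ObjEv Proc Op Ret)))
    (h0 h1 h2 : List (ObjEv Proc Op Ret)) : Prop :=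
  LinInto Spec (h0 ++ h1) → LinInto Spec (h0 ++ h2) →
    ∀ h, Shuffle h1 h2 h → LinInto Spec (h0 ++ h)

def SpecMergeableAfter (strong : Bool) (Spec : Set (List (ObjEv Proc Op Ret)))
    (h0 h1 h2 : List (ObjEv Proc Op Ret)) : Prop :=
  if strong then StronglySpecMergeableAfter Spec h0 h1 h2
  else WeaklySpecMergeableAfter Spec h0 h1 h2

/-- One-sided non-commutativity. -/
def OneSidedNonComm (Spec : Set (List (ObjEv Proc Op Ret))) (o1 o2 : Op) : Prop :=
  ∃ (h0 : List (ObjEv Proc Op Ret)) (p1 p2 : Proc) (u1 v1 u2 : Ret),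
    CompleteSeq h0 ∧ p1 ≠ p2 ∧ u1 ≠ v1 ∧
    h0 ++ invres p1 o1 u1 ∈ Spec ∧
    h0 ++ invres p2 o2 u2 ++ invres p1 o1 v1 ∈ Spec

/-- Two-sided non-commutativity. -/
def TwoSidedNonComm (Spec : Set (List (ObjEv Proc Op Ret))) (o1 o2 : Op) : Prop :=
  ∃ (h0 : List (ObjEv Proc Op Ret)) (p1 p2 : Proc) (u1 v1 u2 v2 : Ret),
    CompleteSeq h0 ∧ p1 ≠ p2 ∧ u1 ≠ v1 ∧ u2 ≠ v2 ∧
    h0 ++ invres p1 o1 u1 ++ invres p2 o2 v2 ∈ Spec ∧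
    h0 ++ invres p2 o2 u2 ++ invres p1 o1 v1 ∈ Spec

end Lin

/-! ### Implementations -/

/-- An implementation of an operation for a process `p`: an LTS labeled by events of `p`
in which a response event is always the last transition. -/
structure OpImpl (Proc Var Val Op Ret : Type) (p : Proc) : Type 1 where
  State : Type
  init : State
  step : State → Ev Proc Var Val Op Ret → State → Prop
  proc_eq : ∀ q e q', step q e q' → Ev.proc e = p
  res_final : ∀ (q : State) (u : Ret) (q' : State),
    step q ⟨p, EvAct.res u⟩ q' → ∀ e q'', ¬ step q' e q''

section Impl

variable {Proc Var Val Op Ret : Type}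

def OpImpl.traces {p : Proc} (Iop : OpImpl Proc Var Val Op Ret p) :
    Set (List (Ev Proc Var Val Op Ret)) :=
  {π | ∃ q : Iop.State, LTSPath Iop.step Iop.init π q}

/-- An implementation of an object. -/
def Impl (Proc Var Val Op Ret : Type) : Type 1 :=
  (o : Op) → (p : Proc) → OpImpl Proc Var Val Op Ret p

/-- Per-process states of the system induced by an implementation: `none` is idle. -/
def SIPState (I : Impl Proc Var Val Op Ret) (p : Proc) : Type :=
  Option ((o : Op) × (I o p).State)

/-- Per-process transitions of the system induced by an implementation. -/
inductive SIPStep (I : Impl Proc Var Val Op Ret) (p : Proc) :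
    SIPState I p → Ev Proc Var Val Op Ret → SIPState I p → Prop where
  | invoke (o : Op) :
      SIPStep I p none ⟨p, EvAct.inv o⟩ (some ⟨o, (I o p).init⟩)
  | memStep {o : Op} {q q' : (I o p).State} (a : MemAct Var Val) :
      (I o p).step q ⟨p, EvAct.mem a⟩ q' →
      SIPStep I p (some ⟨o, q⟩) ⟨p, EvAct.mem a⟩ (some ⟨o, q'⟩)
  | resStep {o : Op} {q q' : (I o p).State} (u : Ret) :
      (I o p).step q ⟨p, EvAct.res u⟩ q' →
      SIPStep I p (some ⟨o, q⟩) ⟨p, EvAct.res u⟩ none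

def SIState (I : Impl Proc Var Val Op Ret) : Type :=
  (p : Proc) → SIPState I p

/-- The system induced by an implementation interleaves the processes. -/
inductive SIStep [DecidableEq Proc] (I : Impl Proc Var Val Op Ret) :
    SIState I → Ev Proc Var Val Op Ret → SIState I → Prop where
  | mk (s : SIState I) (p : Proc) (e : Ev Proc Var Val Op Ret) (t : SIPState I p) :
      SIPStep I p (s p) e t → SIStep I s e (Function.update s p t)

def ImplTraces [DecidableEq Proc] (I : Impl Proc Var Val Op Ret) :
    Set (List (Ev Proc Var Val Op Ret)) :=
  {π | ∃ s : SIState I, LTSPath (SIStep I) (fun _ => none) π s}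

/-- Histories generated by `I` after `π0` under memory model `M`. -/
def GenHist [DecidableEq Proc] (π0 : List (Ev Proc Var Val Op Ret))
    (I : Impl Proc Var Val Op Ret) (M : MemModel Proc Var Val) :
    Set (List (ObjEv Proc Op Ret)) :=
  {h | ∃ π : List (Ev Proc Var Val Op Ret),
      π0 ++ π ∈ ImplTraces I ∧ restrictObj π = h ∧
      restrictMem (π0 ++ π) ∈ M.OTraces M.init}

/-- Consistency: every complete generated history linearizes into the specification. -/
def Consistent [DecidableEq Proc] (I : Impl Proc Var Val Op Ret)
    (M : MemModel Proc Var Val) (Spec : Set (List (ObjEv Proc Op Ret))) : Prop :=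
  ∀ h ∈ GenHist [] I M, CompleteH h → LinInto Spec h

/-- Availability after `h0` w.r.t. `h`. -/
def AvailableAfter [DecidableEq Proc] [DecidableEq Var] [Zero Val]
    (I : Impl Proc Var Val Op Ret) (h0 h : List (ObjEv Proc Op Ret)) : Prop :=
  ∀ π0 ∈ ImplTraces I,
    restrictMem π0 ∈ (SCMModel Proc Var Val).OTraces (SCMModel Proc Var Val).init →
    restrictObj π0 = h0 →
    h ∈ GenHist π0 I (SCMModel Proc Var Val)

def SpecAvailable [DecidableEq Proc] [DecidableEq Var] [Zero Val]
    (I : Impl Proc Var Val Op Ret) (Spec : Set (List (ObjEv Proc Op Ret))) : Prop :=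
  ∀ h0 h : List (ObjEv Proc Op Ret), CompleteSeq h0 → CompleteSeq h →
    h0 ++ h ∈ Spec → AvailableAfter I h0 h

end Impl

/-! ### Fence insertion -/

section Fence

variable {Proc Var Val Op Ret : Type}

/-- `FenceInsertion π π'` : `π'` is obtained from `π` by inserting fence events. -/
inductive FenceInsertion : List (Ev Proc Var Val Op Ret) → List (Ev Proc Var Val Op Ret) → Prop where
  | nil : FenceInsertion [] []
  | keep (e : Ev Proc Var Val Op Ret) {π π' : List (Ev Proc Var Val Op Ret)} :
      FenceInsertion π π' → FenceInsertion (e :: π) (e :: π')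
  | fence (p : Proc) {π π' : List (Ev Proc Var Val Op Ret)} :
      FenceInsertion π π' → FenceInsertion π (⟨p, EvAct.mem MemAct.fence⟩ :: π')

/-- Every write is separated from every later read or response by a fence. -/
def FencedWrites (π : List (Ev Proc Var Val Op Ret)) : Prop :=
  ∀ (i j : ℕ) (ei ej : Ev Proc Var Val Op Ret),
    i < j → π[i]? = some ei → π[j]? = some ej →
    Ev.isWriteEv ei → (Ev.isReadEv ej ∨ Ev.isResEv ej) →
    ∃ (k : ℕ) (ek : Ev Proc Var Val Op Ret),
      i < k ∧ k < j ∧ π[k]? = some ek ∧ Ev.isFenceEv ek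

/-- Histories generated by `I` under `M` (from the initial state). -/
def GeneratedHistories [DecidableEq Proc] (I : Impl Proc Var Val Op Ret)
    (M : MemModel Proc Var Val) : Set (List (ObjEv Proc Op Ret)) :=
  {h | ∃ π ∈ ImplTraces I, restrictObj π = h ∧ restrictMem π ∈ M.OTraces M.init}

end Fence

/-! ### The snapshot object -/

inductive SnapOp (W : Type) : Type where
  | update (w : W)
  | scan

inductive SnapRet (Proc W : Type) : Type where
  | ack
  | vec (v : Proc → Option W)

section Snapshot

variable {Proc W : Type}

/-- The sequential specification of the single-writer snapshot object, threaded
through the current contents `s`. -/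
inductive SnapSpecFrom [DecidableEq Proc] :
    (Proc → Option W) → List (ObjEv Proc (SnapOp W) (SnapRet Proc W)) → Prop where
  | nil (s : Proc → Option W) : SnapSpecFrom s []
  | update (s : Proc → Option W) (p : Proc) (w : W)
      {h : List (ObjEv Proc (SnapOp W) (SnapRet Proc W))} :
      SnapSpecFrom (Function.update s p (some w)) h →
      SnapSpecFrom s (⟨p, ObjAct.inv (SnapOp.update w)⟩ :: ⟨p, ObjAct.res SnapRet.ack⟩ :: h)
  | scan (s : Proc → Option W) (p : Proc)
      {h : List (ObjEv Proc (SnapOp W) (SnapRet Proc W))} :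
      SnapSpecFrom s h →
      SnapSpecFrom s (⟨p, ObjAct.inv SnapOp.scan⟩ :: ⟨p, ObjAct.res (SnapRet.vec s)⟩ :: h)

def SnapSpec (Proc W : Type) [DecidableEq Proc] :
    Set (List (ObjEv Proc (SnapOp W) (SnapRet Proc W))) :=
  {h | SnapSpecFrom (fun _ => none) h}

end Snapshot
/-! The system induced by an implementation is a product of per-process systems in which every
step moves a single component. So a sequence is a trace exactly when each of its per-process
projections is, and each projection of `π0 ++ π` is one of `π0 ++ π1` or of `π0 ++ π2`,
depending on which side of the shuffle the process belongs to. -/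

section ShuffleClosure

variable {Proc Var Val Op Ret : Type}

theorem Shuffle.filter_eq_left {α : Type u} {s1 s2 s : List α} (h : Shuffle s1 s2 s)
    {q : α → Bool} (hq : ∀ x ∈ s2, q x = false) : s.filter q = s1.filter q := by
  induction h with
  | nil => rfl
  | left x _ ih => simp [List.filter_append, ih hq]
  | right x _ ih =>
    simp only [List.mem_append, List.mem_singleton] at hq
    simp [List.filter_append, ih fun y hy => hq y (.inl hy), hq x (.inr rfl)]

theorem Shuffle.filter_eq_right {α : Type u} {s1 s2 s : List α} (h : Shuffle s1 s2 s)
    {q : α → Bool} (hq : ∀ x ∈ s1, q x = false) : s.filter q = s2.filter q := by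
  induction h with
  | nil => rfl
  | left x _ ih =>
    simp only [List.mem_append, List.mem_singleton] at hq
    simp [List.filter_append, ih fun y hy => hq y (.inl hy), hq x (.inr rfl)]
  | right x _ ih => simp [List.filter_append, ih hq]

theorem LTSPath.eq_of_nil {S : Type u} {L : Type v} {step : S → L → S → Prop} {s s' : S}
    (h : LTSPath step s ([] : List L) s') : s' = s := by
  cases h; rfl

theorem SIPStep.proc_eq {I : Impl Proc Var Val Op Ret} {p : Proc}
    {t t' : SIPState I p} {e : Ev Proc Var Val Op Ret}
    (h : SIPStep I p t e t') : e.proc = p := by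
  cases h <;> rfl

variable [DecidableEq Proc] {I : Impl Proc Var Val Op Ret}

theorem SIState.update_self (p : Proc) (t : SIPState I p) (s : SIState I) :
    Function.update s p t p = t :=
  Function.update_self p t s

theorem SIState.update_of_ne {p q : Proc} (h : q ≠ p) (t : SIPState I p) (s : SIState I) :
    Function.update s p t q = s q :=
  Function.update_of_ne h t s

theorem LTSPath.filter_proc_of_siStep {s s' : SIState I} {π : List (Ev Proc Var Val Op Ret)}
    (h : LTSPath (SIStep I) s π s') (p : Proc) :
    LTSPath (SIPStep I p) (s p) (π.filter (fun e => decide (e.proc = p))) (s' p) := by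
  induction h with
  | nil => exact .nil _
  | @cons s _ _ e _ hst _ ih =>
    obtain ⟨q, _, t, hq⟩ := hst
    by_cases hqp : q = p
    · subst hqp
      rw [SIState.update_self] at ih
      simpa [hq.proc_eq] using LTSPath.cons hq ih
    · rw [SIState.update_of_ne (Ne.symm hqp)] at ih
      simpa [hq.proc_eq, hqp] using ih

theorem LTSPath.siStep_of_forall_filter_proc :
    ∀ {π : List (Ev Proc Var Val Op Ret)} {s f : SIState I},
      (∀ p, LTSPath (SIPStep I p) (s p) (π.filter (fun e => decide (e.proc = p))) (f p)) →
      LTSPath (SIStep I) s π f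
  | [], s, f, h => by
    obtain rfl : f = s := funext fun p => (h p).eq_of_nil
    exact .nil _
  | e :: π, s, f, h => by
    have he := h e.proc
    rw [List.filter_cons_of_pos (by simp)] at he
    obtain _ | ⟨hst, hrest⟩ := he
    refine .cons (.mk s e.proc e _ hst) (siStep_of_forall_filter_proc fun p => ?_)
    by_cases hp : p = e.proc
    · subst hp
      rwa [SIState.update_self]
    · have hp' := h p
      rw [List.filter_cons_of_neg (by simpa [eq_comm] using hp)] at hp'
      rwa [SIState.update_of_ne hp]

theorem decide_proc_eq_false_of_notMem_procsEv {ρ : List (Ev Proc Var Val Op Ret)} {p : Proc}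
    (hp : p ∉ procsEv ρ) : ∀ e ∈ ρ, decide (e.proc = p) = false :=
  fun e he => decide_eq_false fun h => hp ⟨e, he, h⟩

theorem mem_implTraces_iff {π : List (Ev Proc Var Val Op Ret)} :
    π ∈ ImplTraces I ↔
      ∀ p, ∃ t, LTSPath (SIPStep I p) none (π.filter (fun e => decide (e.proc = p))) t := by
  constructor
  · rintro ⟨s, hs⟩ p
    exact ⟨s p, hs.filter_proc_of_siStep p⟩
  · intro h
    choose f hf using h
    exact ⟨f, LTSPath.siStep_of_forall_filter_proc hf⟩

theorem mem_implTraces_of_forall_filter_proc_eq {π : List (Ev Proc Var Val Op Ret)}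
    (h : ∀ p, ∃ π' ∈ ImplTraces I,
      π.filter (fun e => decide (e.proc = p)) = π'.filter (fun e => decide (e.proc = p))) :
    π ∈ ImplTraces I :=
  mem_implTraces_iff.mpr fun p => by
    obtain ⟨π', hπ', heq⟩ := h p
    rw [heq]
    exact mem_implTraces_iff.mp hπ' p

end ShuffleClosure

theorem implTraces_shuffle_closed_general (Proc Var Val Op Ret : Type)
    [DecidableEq Proc]
    (I : Impl Proc Var Val Op Ret)
    (π0 π1 π2 π : List (Ev Proc Var Val Op Ret))
    (h1 : π0 ++ π1 ∈ ImplTraces I) (h2 : π0 ++ π2 ∈ ImplTraces I)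
    (hd : procsEv π1 ∩ procsEv π2 = ∅)
    (hs : Shuffle π1 π2 π) :
    π0 ++ π ∈ ImplTraces I := by
  refine mem_implTraces_of_forall_filter_proc_eq fun p => ?_
  by_cases hp : p ∈ procsEv π1
  · have hp2 : p ∉ procsEv π2 :=
      (Set.disjoint_iff_inter_eq_empty.mpr hd).notMem_of_mem_left hp
    exact ⟨π0 ++ π1, h1, by rw [List.filter_append, List.filter_append,
      hs.filter_eq_left (decide_proc_eq_false_of_notMem_procsEv hp2)]⟩
  · exact ⟨π0 ++ π2, h2, by rw [List.filter_append, List.filter_append,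
      hs.filter_eq_right (decide_proc_eq_false_of_notMem_procsEv hp)]⟩

/-- closure of implementation traces under shuffles of continuations
by disjoint sets of processes. -/
theorem implTraces_shuffle_closed (Proc Var Val Op Ret : Type) [Fintype Proc]
    [DecidableEq Proc]
    (I : Impl Proc Var Val Op Ret)
    (π0 π1 π2 π : List (Ev Proc Var Val Op Ret))
    (h1 : π0 ++ π1 ∈ ImplTraces I) (h2 : π0 ++ π2 ∈ ImplTraces I)
    (hc : CompleteH (restrictObj π0))
    (hd : procsEv π1 ∩ procsEv π2 = ∅)
    (hs : Shuffle π1 π2 π) :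
    π0 ++ π ∈ ImplTraces I :=
  implTraces_shuffle_closed_general Proc Var Val Op Ret I π0 π1 π2 π h1 h2 hd hs

end WMM
end

section
/- Let O be a deterministic object and suppose o1 ∈ ops(O) is one-sided non-commutative w.r.t. o2 ∈ ops(O) in spec(O). Then there exist a complete sequential history h0, processes p1 ≠ p2, and response values u1, u2 ∈ rets(O) such that the histories ⟨p1: o1 ⇒ u1⟩ and ⟨p2: o2 ⇒ u2⟩ are not strongly mergeable in spec(O) after h0. -/
set_option autoImplicit false

namespace WMM

universe u v

section Aux

variable {Proc Op Ret : Type}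

lemma completeSeq_append {a b : List (ObjEv Proc Op Ret)} (ha : CompleteSeq a)
    (hb : CompleteSeq b) : CompleteSeq (a ++ b) := by
  induction ha with
  | nil => simpa
  | cons p o u ht ih =>
    simp only [List.cons_append]
    exact CompleteSeq.cons p o u ih

lemma completeSeq_invres (p : Proc) (o : Op) (u : Ret) :
    CompleteSeq (invres p o u) := CompleteSeq.cons p o u CompleteSeq.nil

lemma shuffle_append_left {α : Type u} {s1 s2 s : List α} (h : Shuffle s1 s2 s) (t : List α) :
    Shuffle (s1 ++ t) s2 (s ++ t) := by
  induction t using List.reverseRecOn with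
  | nil => simpa
  | append_singleton t x ih =>
    rw [← List.append_assoc, ← List.append_assoc]
    exact Shuffle.left x ih

lemma shuffle_append_right {α : Type u} {s1 s2 s : List α} (h : Shuffle s1 s2 s) (t : List α) :
    Shuffle s1 (s2 ++ t) (s ++ t) := by
  induction t using List.reverseRecOn with
  | nil => simpa
  | append_singleton t x ih =>
    rw [← List.append_assoc, ← List.append_assoc]
    exact Shuffle.right x ih

lemma linInto_of_mem {Spec : Set (List (ObjEv Proc Op Ret))} {h : List (ObjEv Proc Op Ret)}
    (hm : h ∈ Spec) : LinInto Spec h :=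
  ⟨h, hm, Equiv.refl _, fun _ => rfl, fun _ _ hij _ => hij⟩

lemma completeSeq_adj {h : List (ObjEv Proc Op Ret)} (hc : CompleteSeq h) :
    ∀ (i : ℕ) (hi : i + 1 < h.length),
      linRel (h[i]'(Nat.lt_of_succ_lt hi)) (h[i+1]'hi) := by
  induction hc with
  | nil => intro i hi; simp at hi
  | @cons p o u t ht ih =>
    intro i hi
    match i with
    | 0 => exact Or.inl rfl
    | 1 =>
      refine Or.inr ⟨trivial, ?_⟩
      have h0 : 0 < t.length := by simp at hi; omega
      show (t[0]'h0).act.isInv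
      cases ht with
      | nil => simp at h0
      | cons q o' u' _ => exact trivial
    | (k+2) =>
      have hk : k + 1 < t.length := by simp at hi; omega
      exact ih k hk

lemma fin_le_of_strictMono {a b : ℕ} {g : Fin a → Fin b} (hg : StrictMono g) :
    ∀ i : Fin a, (i : ℕ) ≤ (g i : ℕ) := by
  intro i
  obtain ⟨k, hk⟩ := i
  induction k with
  | zero => exact Nat.zero_le _
  | succ k ihk =>
    have hk' : k < a := by omega
    have h1 : ((g ⟨k, hk'⟩ : Fin b) : ℕ) < ((g ⟨k+1, hk⟩ : Fin b) : ℕ) :=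
      hg (show (⟨k, hk'⟩ : Fin a) < ⟨k+1, hk⟩ by simp [Fin.lt_def])
    have h2 : k ≤ ((g ⟨k, hk'⟩ : Fin b) : ℕ) := ihk hk'
    show k + 1 ≤ ((g ⟨k+1, hk⟩ : Fin b) : ℕ)
    omega

lemma equiv_symm_strictMono {n m : ℕ} (f : Fin n ≃ Fin m) (hf : StrictMono (f : Fin n → Fin m)) :
    StrictMono (f.symm : Fin m → Fin n) := by
  intro a b hab
  rcases lt_trichotomy (f.symm a) (f.symm b) with h | h | h
  · exact h
  · exfalso
    have : a = b := by
      have := congrArg f h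
      simpa using this
    exact absurd this (ne_of_lt hab)
  · exfalso
    have := hf h
    simp only [Equiv.apply_symm_apply] at this
    exact absurd hab (not_lt_of_gt this)

lemma strictMono_equiv_val {n m : ℕ} (f : Fin n ≃ Fin m)
    (hf : StrictMono (f : Fin n → Fin m)) (i : Fin n) : ((f i : Fin m) : ℕ) = (i : ℕ) := by
  have h1 := fin_le_of_strictMono hf i
  have h2 := fin_le_of_strictMono (equiv_symm_strictMono f hf) (f i)
  simp only [Equiv.symm_apply_apply] at h2
  omega

/-- A complete sequential history is rigid under `lin`-reorderings. -/
lemma reorder_completeSeq_eq {h h' : List (ObjEv Proc Op Ret)} (hc : CompleteSeq h)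
    (hr : Reorder linRel h h') : h' = h := by
  obtain ⟨f, hget, hmono⟩ := hr
  have adj : ∀ (k : ℕ) (hk : k + 1 < h.length),
      f ⟨k, Nat.lt_of_succ_lt hk⟩ < f ⟨k+1, hk⟩ := by
    intro k hk
    refine hmono _ _ (by simp [Fin.lt_def]) ?_
    have := completeSeq_adj hc k hk
    simpa [List.get_eq_getElem] using this
  have key : ∀ (d : ℕ) (i j : Fin h.length), (j : ℕ) = (i : ℕ) + d + 1 → f i < f j := by
    intro d
    induction d with
    | zero =>
      intro i j hij
      have hj : j = ⟨(i : ℕ) + 1, by omega⟩ := Fin.ext hij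
      rw [hj]
      exact adj (i : ℕ) (by omega)
    | succ d ihd =>
      intro i j hij
      have hmid : (i : ℕ) + d + 1 < h.length := by omega
      refine lt_trans (ihd i ⟨(i : ℕ) + d + 1, hmid⟩ rfl) ?_
      have hj : j = ⟨(i : ℕ) + d + 2, by omega⟩ :=
        Fin.ext (show (j : ℕ) = (i : ℕ) + d + 2 by omega)
      rw [hj]
      exact adj ((i : ℕ) + d + 1) (by omega)
  have hsm : StrictMono (f : Fin h.length → Fin h'.length) := by
    intro i j hij
    have : (j : ℕ) = (i : ℕ) + ((j : ℕ) - (i : ℕ) - 1) + 1 := by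
      have := Fin.lt_def.mp hij; omega
    exact key _ i j this
  have hlen : h'.length = h.length := by
    have := Fintype.card_congr f
    simpa using this.symm
  refine List.ext_get hlen ?_
  intro i h1 h2
  have hfi : f ⟨i, h2⟩ = ⟨i, h1⟩ := Fin.ext (strictMono_equiv_val f hsm ⟨i, h2⟩)
  have := hget ⟨i, h2⟩
  rw [hfi] at this
  exact this

end Aux

/-- for a deterministic object, a one-sided non-commutative pair of
operations yields single-operation histories that are not strongly mergeable. -/
theorem one_sided_not_strongly_mergeable (Proc Op Ret : Type) [Fintype Proc]
    [DecidableEq Proc]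
    (Spec : Set (List (ObjEv Proc Op Ret))) (hSpec : IsSpec Spec)
    (hdet : Deterministic Spec)
    (o1 o2 : Op) (hnc : OneSidedNonComm Spec o1 o2) :
    ∃ (h0 : List (ObjEv Proc Op Ret)) (p1 p2 : Proc) (u1 u2 : Ret),
      CompleteSeq h0 ∧ p1 ≠ p2 ∧
      ¬ StronglySpecMergeableAfter Spec h0 (invres p1 o1 u1) (invres p2 o2 u2) := by
  obtain ⟨h0, p1, p2, u1, v1, u2, hc0, hp, huv, hm1, hm2⟩ := hnc
  refine ⟨h0, p1, p2, u1, u2, hc0, hp, ?_⟩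
  intro hsm
  -- the history h0 ++ invres p2 o2 u2 is in Spec by prefix closure
  have hcg : CompleteSeq (h0 ++ invres p2 o2 u2) :=
    completeSeq_append hc0 (completeSeq_invres p2 o2 u2)
  have hg : h0 ++ invres p2 o2 u2 ∈ Spec :=
    hSpec.2 _ hm2 _ ⟨invres p1 o1 v1, by rw [List.append_assoc]⟩ hcg
  -- the shuffle putting o2 first
  have hshuf : Shuffle (invres p1 o1 u1) (invres p2 o2 u2)
      (invres p2 o2 u2 ++ invres p1 o1 u1) := by
    have := shuffle_append_left
      (shuffle_append_right (Shuffle.nil (α := ObjEv Proc Op Ret)) (invres p2 o2 u2))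
      (invres p1 o1 u1)
    simpa using this
  have hlin := hsm (linInto_of_mem hm1) (linInto_of_mem hg) _ hshuf
  obtain ⟨h', hh'mem, hh'r⟩ := hlin
  have hcs : CompleteSeq (h0 ++ (invres p2 o2 u2 ++ invres p1 o1 u1)) :=
    completeSeq_append hc0
      (completeSeq_append (completeSeq_invres p2 o2 u2) (completeSeq_invres p1 o1 u1))
  have hh' : h' = h0 ++ (invres p2 o2 u2 ++ invres p1 o1 u1) := reorder_completeSeq_eq hcs hh'r
  rw [hh'] at hh'mem
  -- apply determinism
  set g : List (ObjEv Proc Op Ret) := h0 ++ invres p2 o2 u2 with hgdef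
  have hmem1 : g ++ invres p1 o1 u1 ∈ Spec := by
    rw [hgdef, List.append_assoc]; exact hh'mem
  have hmem2 : g ++ invres p1 o1 v1 ∈ Spec := hm2
  have hpre1 : (g ++ [⟨p1, ObjAct.inv o1⟩]) <+: g ++ invres p1 o1 u1 := by
    rw [List.prefix_append_right_inj]
    exact ⟨[⟨p1, ObjAct.res u1⟩], rfl⟩
  have hpre2 : (g ++ [⟨p1, ObjAct.inv o1⟩]) <+: g ++ invres p1 o1 v1 := by
    rw [List.prefix_append_right_inj]
    exact ⟨[⟨p1, ObjAct.res v1⟩], rfl⟩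
  obtain ⟨e, he1, he2⟩ := hdet _ hmem1 _ hmem2 g p1 o1 hpre1 hpre2
  rw [List.prefix_append_right_inj] at he1 he2
  have heu : e = ⟨p1, ObjAct.res u1⟩ := by
    have := he1
    simp only [invres, List.cons_prefix_cons] at this
    exact this.2.1
  have hev : e = ⟨p1, ObjAct.res v1⟩ := by
    have := he2
    simp only [invres, List.cons_prefix_cons] at this
    exact this.2.1
  rw [heu] at hev
  apply huv
  simpa using hev

end WMM
end
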